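/- For all nonnegative integers i, complex parameters α, β, and complex numbers x, y, the convolution identity Σ_{j=0}^{i} L_{i-j}^{(α)}(x) · L_j^{(β)}(y) = L_i^{(α+β+1)}(x+y) holds. -/

import Mathlib

open Finset

/-- Generalized binomial coefficient C(x, k) = x(x-1)⋯(x-k+1)/k!. -/
noncomputable def gbinom (x : ℂ) (k : ℕ) : ℂ :=
  (∏ j ∈ Finset.range k, (x - j)) / (k.factorial : ℂ)

/-- Generalized Laguerre polynomial L_i^{(α)}(z) = Σ_{j=0}^i (-1)^j C(i+α, i-j) z^j / j!. -/
noncomputable def lag (i : ℕ) (α z : ℂ) : ℂ :=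
  ∑ j ∈ Finset.range (i + 1), (-1 : ℂ) ^ j * gbinom ((i : ℂ) + α) (i - j) * z ^ j / (j.factorial : ℂ)

/-!
Write `L_i^{(α)}(z) = ∑_{a + k = i} (-z)^a / a! · C(α + a + k, k)`, with
`C(α + a + k, k) = multichoose (α + a + 1) k`. The convolution is then a sum over
`a + k + b + l = i` of
`(-x)^a/a! · (-y)^b/b! · multichoose (α + a + 1) k · multichoose (β + b + 1) l`.
Grouping by `(a + b, k + l)` instead of `(a + k, b + l)`, the binomial theorem combines the
exponential factors into `(-(x + y))^c / c!`, and the Chu–Vandermonde identity for `multichoose`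
(upper negation of `Ring.add_choose_eq`) combines the others into
`multichoose (α + β + 2 + c) m`: these are the summands of `L_i^{(α+β+1)}(x + y)`.
-/

theorem Ring.multichoose_eq_neg_one_pow_mul_choose_neg {R : Type*} [CommRing R] [BinomialRing R]
    (r : R) (n : ℕ) : Ring.multichoose r n = (-1) ^ n * Ring.choose (-r) n := by
  rw [Ring.choose_neg', Units.smul_def, Int.coe_negOnePow_natCast, zsmul_eq_mul, Int.cast_pow,
    Int.cast_neg, Int.cast_one, ← mul_assoc, ← mul_pow, neg_one_mul, neg_neg, one_pow, one_mul]

theorem Ring.multichoose_add {R : Type*} [CommRing R] [BinomialRing R] (r s : R) (k : ℕ) :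
    Ring.multichoose (r + s) k =
      ∑ p ∈ antidiagonal k, Ring.multichoose r p.1 * Ring.multichoose s p.2 := by
  rw [Ring.multichoose_eq_neg_one_pow_mul_choose_neg, neg_add, Ring.add_choose_eq k (.all _ _),
    mul_sum]
  refine sum_congr rfl fun p hp => ?_
  rw [Ring.multichoose_eq_neg_one_pow_mul_choose_neg,
    Ring.multichoose_eq_neg_one_pow_mul_choose_neg, ← HasAntidiagonal.mem_antidiagonal.mp hp,
    pow_add]
  ring

theorem add_pow_div_factorial {K : Type*} [Field K] [CharZero K] (x y : K) (n : ℕ) :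
    (x + y) ^ n / n.factorial =
      ∑ p ∈ antidiagonal n, x ^ p.1 / p.1.factorial * (y ^ p.2 / p.2.factorial) := by
  rw [(Commute.all x y).add_pow', sum_div]
  refine sum_congr rfl fun p hp => ?_
  obtain rfl := HasAntidiagonal.mem_antidiagonal.mp hp
  have hchoose : ((p.1 + p.2).choose p.1 : K) ≠ 0 := by
    exact_mod_cast (Nat.choose_pos (Nat.le_add_right _ _)).ne'
  rw [nsmul_eq_mul, ← Nat.add_choose_mul_factorial_mul_factorial, ← Nat.choose_symm_add]
  push_cast
  field_simp

theorem sum_antidiagonal_antidiagonal_transpose {M : Type*} [AddCommMonoid M] (n : ℕ)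
    (F : ℕ × ℕ → ℕ × ℕ → M) :
    ∑ p ∈ antidiagonal n, ∑ q ∈ antidiagonal p.1, ∑ r ∈ antidiagonal p.2, F q r =
      ∑ p ∈ antidiagonal n, ∑ q ∈ antidiagonal p.1, ∑ r ∈ antidiagonal p.2,
        F (q.1, r.1) (q.2, r.2) := by
  simp only [← sum_product']
  rw [sum_sigma', sum_sigma']
  let τ : (Σ _ : ℕ × ℕ, (ℕ × ℕ) × (ℕ × ℕ)) → Σ _ : ℕ × ℕ, (ℕ × ℕ) × (ℕ × ℕ) :=
    fun ⟨_, (a, k), (b, l)⟩ => ⟨(a + b, k + l), (a, b), (k, l)⟩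
  refine sum_nbij' τ τ ?_ ?_ ?_ ?_ ?_
  all_goals
    rintro ⟨⟨c, m⟩, ⟨a, k⟩, ⟨b, l⟩⟩ h
    simp only [τ, mem_sigma, mem_product, HasAntidiagonal.mem_antidiagonal, and_true] at h ⊢
  · omega
  · omega
  all_goals obtain ⟨-, rfl, rfl⟩ := h; rfl

theorem gbinom_eq_choose (x : ℂ) (k : ℕ) : gbinom x k = Ring.choose x k := by
  rw [Ring.choose_eq_smul, ← Polynomial.aeval_eq_smeval, Polynomial.aeval_def,
    Polynomial.eval₂_eq_eval_map, descPochhammer_map, descPochhammer_eval_eq_prod_range, gbinom,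
    smul_eq_mul, div_eq_inv_mul]

noncomputable def lagTerm (α z : ℂ) (p : ℕ × ℕ) : ℂ :=
  (-z) ^ p.1 / p.1.factorial * Ring.multichoose (α + p.1 + 1) p.2

theorem lag_eq_sum_lagTerm (i : ℕ) (α z : ℂ) :
    lag i α z = ∑ p ∈ antidiagonal i, lagTerm α z p := by
  rw [lag, ← Nat.sum_antidiagonal_eq_sum_range_succ
    (fun a k => (-1 : ℂ) ^ a * gbinom ((i : ℂ) + α) k * z ^ a / a.factorial)]
  refine sum_congr rfl fun p hp => ?_
  obtain rfl := HasAntidiagonal.mem_antidiagonal.mp hp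
  rw [lagTerm, gbinom_eq_choose, Ring.multichoose_eq, neg_pow z, Nat.cast_add,
    show α + p.1 + 1 + p.2 - 1 = (p.1 + p.2 : ℂ) + α by ring]
  ring

theorem sum_lagTerm_mul_lagTerm (α β x y : ℂ) (p : ℕ × ℕ) :
    ∑ q ∈ antidiagonal p.1, ∑ r ∈ antidiagonal p.2,
        lagTerm α x (q.1, r.1) * lagTerm β y (q.2, r.2) = lagTerm (α + β + 1) (x + y) p := by
  rw [lagTerm, neg_add, add_pow_div_factorial, sum_mul]
  refine sum_congr rfl fun q hq => ?_
  have hp : (p.1 : ℂ) = q.1 + q.2 := by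
    exact_mod_cast (HasAntidiagonal.mem_antidiagonal.mp hq).symm
  rw [show α + β + 1 + (p.1 : ℂ) + 1 = (α + q.1 + 1) + (β + q.2 + 1) by rw [hp]; ring,
    Ring.multichoose_add, mul_sum]
  refine sum_congr rfl fun r _ => ?_
  simp only [lagTerm]
  ring

theorem laguerre_convolution (i : ℕ) (α β x y : ℂ) :
    ∑ j ∈ Finset.range (i + 1), lag (i - j) α x * lag j β y = lag i (α + β + 1) (x + y) := by
  calc ∑ j ∈ range (i + 1), lag (i - j) α x * lag j β y
      = ∑ p ∈ antidiagonal i, lag p.1 α x * lag p.2 β y := by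
        rw [← Nat.sum_antidiagonal_eq_sum_range_succ (fun a b => lag b α x * lag a β y),
          ← Nat.sum_antidiagonal_swap]
        rfl
    _ = ∑ p ∈ antidiagonal i, ∑ q ∈ antidiagonal p.1, ∑ r ∈ antidiagonal p.2,
          lagTerm α x q * lagTerm β y r := by
        simp_rw [lag_eq_sum_lagTerm, sum_mul_sum]
    _ = ∑ p ∈ antidiagonal i, ∑ q ∈ antidiagonal p.1, ∑ r ∈ antidiagonal p.2,
          lagTerm α x (q.1, r.1) * lagTerm β y (q.2, r.2) :=
        sum_antidiagonal_antidiagonal_transpose i _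
    _ = lag i (α + β + 1) (x + y) := by
        simp_rw [sum_lagTerm_mul_lagTerm, lag_eq_sum_lagTerm]
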